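/- Energy hierarchy of two-point stationary states, part II: assume D^{(12)} ≠ 0 and define ρ_{b_i}, ρ_c, ρ_d as follows: for i ∈ {1,2} with k := 3−i and D^{(kk)} ≠ 0, |D^{(12)}| ≤ |D^{(kk)}|, ρ_{b_i} has ρ^{(i)}(x_1) = 1, ρ^{(k)}(x_1) = (1 − D^{(12)}/D^{(kk)})/2, ρ^{(k)}(x_2) = (1 + D^{(12)}/D^{(kk)})/2; ρ_c has ρ^{(1)}(x_1) = ρ^{(2)}(x_1) = 1; ρ_d has ρ^{(1)}(x_1) = 1, ρ^{(2)}(x_2) = 1. Then: (i) if D^{(kk)} ≠ 0, |D^{(12)}| ≤ |D^{(kk)}|, D^{(ii)} < (D^{(12)})²/D^{(kk)} (so ρ_{b_i} is stationary) and in addition either D^{(11)} < −D^{(12)} and D^{(22)} < −D^{(12)} (so ρ_c is stationary) or D^{(11)} < D^{(12)} and D^{(22)} < D^{(12)} (so ρ_d is stationary), then E(ρ_α) < E(ρ_{b_i}) for the corresponding α ∈ {c,d}; (ii) one always has E(ρ_d) − E(ρ_c) = K^{(12)}(x_1,x_2) − K^{(12)}(x_1,x_1) = −D^{(12)}; in particular,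 sign(E(ρ_d) − E(ρ_c)) = −sign(D^{(12)}). -/
import Mathlib


open Finset

/-- The interaction energy on the two-point space, written in terms of the vertex masses
`ρ i ι = ρ^{(i)}(x_ι)`. -/
noncomputable def energy2 {d : ℕ} (x : Fin 2 → EuclideanSpace ℝ (Fin d))
    (K : Fin 2 → Fin 2 → EuclideanSpace ℝ (Fin d) → EuclideanSpace ℝ (Fin d) → ℝ)
    (ρ : Fin 2 → Fin 2 → ℝ) : ℝ :=
  (1 / 2) * ∑ i : Fin 2, ∑ k : Fin 2, ∑ ι : Fin 2, ∑ κ : Fin 2,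
    K i k (x ι) (x κ) * ρ i ι * ρ k κ

/-- The uniform distribution `ρ_a`: all four vertex masses equal `1/2`. -/
noncomputable def rhoA2 : Fin 2 → Fin 2 → ℝ := fun _ _ => 1 / 2

/-- The distribution `ρ_{b_i}` (with `c = D^{(12)}/D^{(kk)}`): species `i` aggregated at
the first vertex, the other species with masses `(1 ∓ c)/2`. -/
noncomputable def rhoB2 (i : Fin 2) (c : ℝ) : Fin 2 → Fin 2 → ℝ :=
  fun j ι => if j = i then (if ι = 0 then 1 else 0)
    else (if ι = 0 then (1 - c) / 2 else (1 + c) / 2)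

/-- The distribution `ρ_c`: both species aggregated at the first vertex. -/
noncomputable def rhoC2 : Fin 2 → Fin 2 → ℝ := fun _ ι => if ι = 0 then 1 else 0

/-- The distribution `ρ_d`: species 1 aggregated at the first vertex, species 2 at the
second. -/
noncomputable def rhoD2 : Fin 2 → Fin 2 → ℝ :=
  fun i ι => if i = 0 then (if ι = 0 then 1 else 0) else (if ι = 1 then 1 else 0)

set_option maxHeartbeats 1000000 in
/-- Lemma A.1, part II: if `ρ_{b_i}` is stationary and additionally `ρ_c` (resp. `ρ_d`)
is stationary, then `ρ_c` (resp. `ρ_d`) has strictly lower energy than `ρ_{b_i}`;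
moreover `E(ρ_d) − E(ρ_c) = K^{(12)}(x_1,x_2) − K^{(12)}(x_1,x_1) = −D^{(12)}`, so in
particular `sign(E(ρ_d) − E(ρ_c)) = −sign(D^{(12)})`. -/
theorem two_point_energy_hierarchy_II
    (d : ℕ) (x : Fin 2 → EuclideanSpace ℝ (Fin d)) (hx : x 0 ≠ x 1)
    (μ : Fin 2 → ℝ) (hμ : ∀ ι, 0 < μ ι)
    (η12 : ℝ) (hη : 0 < η12)
    (K : Fin 2 → Fin 2 → EuclideanSpace ℝ (Fin d) → EuclideanSpace ℝ (Fin d) → ℝ)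
    (hKsym : ∀ i k p q, K i k p q = K i k q p)
    (hK12 : ∀ p q, K 0 1 p q = K 1 0 p q)
    (hKdiag : ∀ i k : Fin 2, ∀ p q : EuclideanSpace ℝ (Fin d), K i k p p = K i k q q)
    (D : Fin 2 → Fin 2 → ℝ)
    (hD : ∀ i k, D i k = K i k (x 0) (x 0) - K i k (x 0) (x 1))
    (hD12 : D 0 1 ≠ 0) :
    (∀ i k : Fin 2, i ≠ k → D k k ≠ 0 → |D 0 1| ≤ |D k k| →
      D i i < (D 0 1) ^ 2 / D k k →
        ((D 0 0 < -(D 0 1) ∧ D 1 1 < -(D 0 1)) →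
          energy2 x K rhoC2 < energy2 x K (rhoB2 i (D 0 1 / D k k))) ∧
        ((D 0 0 < D 0 1 ∧ D 1 1 < D 0 1) →
          energy2 x K rhoD2 < energy2 x K (rhoB2 i (D 0 1 / D k k)))) ∧
    energy2 x K rhoD2 - energy2 x K rhoC2 = K 0 1 (x 0) (x 1) - K 0 1 (x 0) (x 0) ∧
    energy2 x K rhoD2 - energy2 x K rhoC2 = -(D 0 1) ∧
    Real.sign (energy2 x K rhoD2 - energy2 x K rhoC2) = -Real.sign (D 0 1) := by
  have e10 : ∀ p q, K 1 0 p q = K 0 1 p q := fun p q => (hK12 p q).symm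
  have ediag : ∀ i k : Fin 2, K i k (x 1) (x 1) = K i k (x 0) (x 0) :=
    fun i k => hKdiag i k _ _
  have esym : ∀ i k : Fin 2, K i k (x 1) (x 0) = K i k (x 0) (x 1) :=
    fun i k => hKsym i k _ _
  have hdc : energy2 x K rhoD2 - energy2 x K rhoC2
      = K 0 1 (x 0) (x 1) - K 0 1 (x 0) (x 0) := by
    simp only [energy2, rhoC2, rhoD2, Fin.sum_univ_two, e10, ediag, esym]
    norm_num
    ring
  have hdc' : energy2 x K rhoD2 - energy2 x K rhoC2 = -(D 0 1) := by
    rw [hdc, hD 0 1]; ring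
  refine ⟨?_, hdc, hdc', by rw [hdc']; exact Real.sign_neg⟩
  intro i k hik
  fin_cases i <;> fin_cases k <;> simp only [Fin.mk_one, Fin.zero_eta] at hik ⊢
  · exact absurd rfl hik
  · -- i = 0, k = 1
    intro hDkk hle hii
    have hD01 := hD 0 1
    have hD11 := hD 1 1
    set cc := D 0 1 / D 1 1 with hcc
    have hc : cc * D 1 1 = D 0 1 := div_mul_cancel₀ _ hDkk
    have hc2 : cc * D 0 1 = cc ^ 2 * D 1 1 := by rw [← hc]; ring
    have hca : cc * (K 0 1 (x 0) (x 0) - K 0 1 (x 0) (x 1)) = cc * D 0 1 := by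
      rw [hD01]
    have hcb : cc ^ 2 * (K 1 1 (x 0) (x 0) - K 1 1 (x 0) (x 1)) = cc ^ 2 * D 1 1 := by
      rw [hD11]
    constructor
    · rintro ⟨h1, h2⟩
      have hneg : D 1 1 < 0 := by
        rcases lt_or_gt_of_ne hDkk with h | h
        · exact h
        · rw [abs_of_pos h] at hle
          linarith [neg_abs_le (D 0 1)]
      have h1c : (1 + cc) * D 1 1 = D 1 1 + D 0 1 := by rw [add_mul, one_mul, hc]
      have hcne : (1 : ℝ) + cc ≠ 0 := by
        intro h; rw [h, zero_mul] at h1c; linarith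
      have hkey : 0 < -(D 1 1) * (1 + cc) ^ 2 := mul_pos (by linarith) (lt_of_le_of_ne (sq_nonneg _) (Ne.symm (pow_ne_zero _ hcne)))
      simp only [energy2, rhoB2, rhoC2, Fin.sum_univ_two, e10, ediag, esym]
      norm_num
      nlinarith [hkey, hc, hc2, hca, hcb, hD01, hD11]
    · rintro ⟨h1, h2⟩
      have hneg : D 1 1 < 0 := by
        rcases lt_or_gt_of_ne hDkk with h | h
        · exact h
        · rw [abs_of_pos h] at hle
          linarith [le_abs_self (D 0 1)]
      have h1c : (1 - cc) * D 1 1 = D 1 1 - D 0 1 := by rw [sub_mul, one_mul, hc]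
      have hcne : (1 : ℝ) - cc ≠ 0 := by
        intro h; rw [h, zero_mul] at h1c; linarith
      have hkey : 0 < -(D 1 1) * (1 - cc) ^ 2 := mul_pos (by linarith) (lt_of_le_of_ne (sq_nonneg _) (Ne.symm (pow_ne_zero _ hcne)))
      simp only [energy2, rhoB2, rhoD2, Fin.sum_univ_two, e10, ediag, esym]
      norm_num
      nlinarith [hkey, hc, hc2, hca, hcb, hD01, hD11]
  · -- i = 1, k = 0
    intro hDkk hle hii
    have hD01 := hD 0 1
    have hD00 := hD 0 0
    set cc := D 0 1 / D 0 0 with hcc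
    have hc : cc * D 0 0 = D 0 1 := div_mul_cancel₀ _ hDkk
    have hc2 : cc * D 0 1 = cc ^ 2 * D 0 0 := by rw [← hc]; ring
    have hca : cc * (K 0 1 (x 0) (x 0) - K 0 1 (x 0) (x 1)) = cc * D 0 1 := by
      rw [hD01]
    have hcb : cc ^ 2 * (K 0 0 (x 0) (x 0) - K 0 0 (x 0) (x 1)) = cc ^ 2 * D 0 0 := by
      rw [hD00]
    constructor
    · rintro ⟨h1, h2⟩
      have hneg : D 0 0 < 0 := by
        rcases lt_or_gt_of_ne hDkk with h | h
        · exact h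
        · rw [abs_of_pos h] at hle
          linarith [neg_abs_le (D 0 1)]
      have h1c : (1 + cc) * D 0 0 = D 0 0 + D 0 1 := by rw [add_mul, one_mul, hc]
      have hcne : (1 : ℝ) + cc ≠ 0 := by
        intro h; rw [h, zero_mul] at h1c; linarith
      have hkey : 0 < -(D 0 0) * (1 + cc) ^ 2 := mul_pos (by linarith) (lt_of_le_of_ne (sq_nonneg _) (Ne.symm (pow_ne_zero _ hcne)))
      simp only [energy2, rhoB2, rhoC2, Fin.sum_univ_two, e10, ediag, esym]
      norm_num
      nlinarith [hkey, hc, hc2, hca, hcb, hD01, hD00]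
    · rintro ⟨h1, h2⟩
      have hneg : D 0 0 < 0 := by
        rcases lt_or_gt_of_ne hDkk with h | h
        · exact h
        · rw [abs_of_pos h] at hle
          linarith [le_abs_self (D 0 1)]
      have h1c : (1 - cc) * D 0 0 = D 0 0 - D 0 1 := by rw [sub_mul, one_mul, hc]
      have hcne : (1 : ℝ) - cc ≠ 0 := by
        intro h; rw [h, zero_mul] at h1c; linarith
      have hkey : 0 < -(D 0 0) * (1 - cc) ^ 2 := mul_pos (by linarith) (lt_of_le_of_ne (sq_nonneg _) (Ne.symm (pow_ne_zero _ hcne)))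
      simp only [energy2, rhoB2, rhoD2, Fin.sum_univ_two, e10, ediag, esym]
      norm_num
      nlinarith [hkey, hc, hc2, hca, hcb, hD01, hD00]
  · exact absurd rfl hik
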